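/- arXiv:1808.08481 — 2 statements merged into one kernel-verified Lean document; each statement's English description precedes it below -/
import Mathlib

section
/- If a palindromic polynomial p(t) = Σ_{k=r}^{⌊n/2⌋} γ_k t^k (1+t)^{n−2k} has all γ_k ≥ 0, then the coefficient sequence of p is unimodal: a_r ≤ a_{r+1} ≤ ... ≤ a_{⌊n/2⌋} ≥ a_{⌊n/2⌋+1} ≥ ... ≥ a_s. -/
open Polynomial

private lemma choose_succ_le_of (m j : ℕ) (h : m ≤ 2*j+1) :
    m.choose (j+1) ≤ m.choose j := by
  rcases le_or_gt (j+1) m with h1 | h1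
  · rcases eq_or_lt_of_le h with h2 | h2
    · -- m = 2j+1
      have : m - (j+1) = j := by omega
      rw [← Nat.choose_symm h1, this]
    · -- m ≤ 2j
      have hm2j : m ≤ 2*j := by omega
      have hjm : j ≤ m := by omega
      calc m.choose (j+1) = m.choose (m - (j+1)) := (Nat.choose_symm h1).symm
        _ ≤ m.choose (m - (j+1) + 1) :=
            Nat.choose_le_succ_of_lt_half_left (by omega)
        _ = m.choose (m - j) := by congr 1; omega
        _ = m.choose j := Nat.choose_symm hjm
  · rw [Nat.choose_eq_zero_of_lt h1]; exact Nat.zero_le _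

private lemma coeff_term (a : ℝ) (k m i : ℕ) :
    (C a * X ^ k * (1 + X : ℝ[X]) ^ m).coeff i
      = a * (if k ≤ i then (m.choose (i - k) : ℝ) else 0) := by
  rw [mul_assoc, coeff_C_mul, mul_comm (X ^ k) _, coeff_mul_X_pow']
  congr 1
  split
  · rw [add_comm, coeff_X_add_one_pow]
  · rfl

/-- If a palindromic polynomial `p = ∑_{k=r}^{⌊n/2⌋} γ_k t^k (1+t)^{n-2k}` has all
`γ_k ≥ 0`, then its coefficient sequence is unimodal: it is weakly increasing up
to degree `⌊n/2⌋` and weakly decreasing from `⌊n/2⌋` to `s = n - r`. -/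
theorem gamma_positive_implies_unimodal (p : Polynomial ℝ) (r n : ℕ)
    (γ : ℕ → ℝ) (hγ : ∀ k, 0 ≤ γ k)
    (hp : p = ∑ k ∈ Finset.Icc r (n / 2), C (γ k) * X ^ k * (1 + X) ^ (n - 2 * k)) :
    (∀ i : ℕ, r ≤ i → i < n / 2 → p.coeff i ≤ p.coeff (i + 1)) ∧
    (∀ i : ℕ, n / 2 ≤ i → i < n - r → p.coeff (i + 1) ≤ p.coeff i) := by
  have hcoeff : ∀ i, p.coeff i
      = ∑ k ∈ Finset.Icc r (n / 2),
          γ k * (if k ≤ i then ((n - 2*k).choose (i - k) : ℝ) else 0) := by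
    intro i
    rw [hp, Polynomial.finset_sum_coeff]
    exact Finset.sum_congr rfl fun k _ => coeff_term _ _ _ _
  constructor
  · intro i hri hin
    rw [hcoeff, hcoeff]
    apply Finset.sum_le_sum
    intro k hk
    simp only [Finset.mem_Icc] at hk
    apply mul_le_mul_of_nonneg_left _ (hγ k)
    by_cases hki : k ≤ i
    · have hki1 : k ≤ i + 1 := le_trans hki (Nat.le_succ _)
      rw [if_pos hki, if_pos hki1]
      have h1 : i + 1 - k = (i - k) + 1 := by omega
      rw [h1]
      have := Nat.choose_le_succ_of_lt_half_left
        (r := i - k) (n := n - 2*k) (by omega)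
      exact_mod_cast this
    · rw [if_neg hki]
      split
      · positivity
      · exact le_refl 0
  · intro i hni hinr
    rw [hcoeff, hcoeff]
    apply Finset.sum_le_sum
    intro k hk
    simp only [Finset.mem_Icc] at hk
    apply mul_le_mul_of_nonneg_left _ (hγ k)
    have hki : k ≤ i := le_trans hk.2 hni
    have hki1 : k ≤ i + 1 := le_trans hki (Nat.le_succ _)
    rw [if_pos hki, if_pos hki1]
    have h1 : i + 1 - k = (i - k) + 1 := by omega
    rw [h1]
    have := choose_succ_le_of (n - 2*k) (i - k) (by omega)
    exact_mod_cast this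
end

section
/- For permutations π₁ ∈ S_k and π₂ ∈ S_{n−k} with n−k ≥ 2 and π₂ ≠ the identity on one letter, the permutation π₁ ∗ π₂ satisfies des(π₁ ∗ π₂) = des'(π₁) + des(π₂) + 1, where des'(σ) counts descents of σ at positions other than the last position. -/
/-!
Cut `π₁ ∗ π₂` just before its largest letter `n`, into `A n` and `n B`. As `n` exceeds every
letter of `A`, the block `A n` has exactly the `des'(π₁)` descents of `A`; `n` is followed by a
smaller letter, which is one more descent; and `B` is the image of `π₂` under
`1 ↦ π₁(k)`, `j ↦ j + k - 1` for `j ≥ 2`, which is strictly increasing on `[1, n - k]` because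
`π₁(k) ≤ k`, so `B` has the `des(π₂)` descents of `π₂`.
-/

/-- Number of descents of a sequence given as a list: adjacent positions `i`
with `l(i) > l(i+1)`. -/
def desL (l : List ℕ) : ℕ := ((l.zip l.tail).filter (fun p => p.2 < p.1)).length

/-- Number of descents excluding the last position, `des'`; this equals the
number of descents of the list with its last entry removed. -/
def desL' (l : List ℕ) : ℕ := desL l.dropLast

/-- The `∗` operation of the paper: `π₁ ∗ π₂ = A n B` where `A = π₁(1)⋯π₁(k-1)`
and `B` is `π₂` shifted up by `k-1` with its entry `1` replaced by `π₁(k)`. -/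
def starPerm (l₁ l₂ : List ℕ) : List ℕ :=
  l₁.dropLast ++ [l₁.length + l₂.length] ++
    l₂.map (fun m => if m = 1 then l₁.getLastD 0 else m + (l₁.length - 1))

lemma desL_cons_cons (a b : ℕ) (l : List ℕ) :
    desL (a :: b :: l) = (if b < a then 1 else 0) + desL (b :: l) := by
  simp only [desL, List.tail_cons, List.zip_cons_cons, List.filter_cons]
  by_cases h : b < a <;> simp [h, Nat.add_comm]

lemma desL_append_cons (xs : List ℕ) (y : ℕ) (ys : List ℕ) :
    desL (xs ++ y :: ys) = desL (xs ++ [y]) + desL (y :: ys) := by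
  induction xs with
  | nil => exact (Nat.zero_add _).symm
  | cons a xs ih =>
    cases xs with
    | nil => simp only [List.cons_append, List.nil_append, desL_cons_cons]; rfl
    | cons b xs =>
      simp only [List.cons_append, desL_cons_cons] at ih ⊢
      omega

lemma desL_append_singleton_of_forall_lt {xs : List ℕ} {y : ℕ} (h : ∀ a ∈ xs, a < y) :
    desL (xs ++ [y]) = desL xs := by
  induction xs with
  | nil => rfl
  | cons a xs ih =>
    cases xs with
    | nil =>
      rw [List.cons_append, List.nil_append, desL_cons_cons, if_neg (Nat.lt_asymm (h a (by simp)))]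
      rfl
    | cons b xs =>
      simp only [List.cons_append, desL_cons_cons] at ih ⊢
      rw [ih fun x hx => h x (List.mem_cons_of_mem a hx)]

lemma desL_cons_of_forall_lt {y : ℕ} {l : List ℕ} (hl : l ≠ []) (h : ∀ a ∈ l, a < y) :
    desL (y :: l) = desL l + 1 := by
  obtain ⟨b, l, rfl⟩ := List.exists_cons_of_ne_nil hl
  rw [desL_cons_cons, if_pos (h b (by simp)), Nat.add_comm]

lemma desL_map_of_lt_iff {f : ℕ → ℕ} {l : List ℕ}
    (h : ∀ a ∈ l, ∀ b ∈ l, f b < f a ↔ b < a) : desL (l.map f) = desL l := by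
  induction l with
  | nil => rfl
  | cons a l ih =>
    cases l with
    | nil => rfl
    | cons b l =>
      have hab := h a (by simp) b (by simp)
      rw [List.map_cons, List.map_cons, desL_cons_cons, desL_cons_cons, ← List.map_cons,
        ih fun x hx y hy => h x (List.mem_cons_of_mem a hx) y (List.mem_cons_of_mem a hy)]
      simp only [hab]

/-- The relabelling of the letters of `π₂` in `π₁ ∗ π₂`, with `L = π₁(k)` and `s = k - 1`. -/
def starRelabel (L s x : ℕ) : ℕ := if x = 1 then L else x + s

lemma starPerm_eq (l₁ l₂ : List ℕ) :
    starPerm l₁ l₂ = l₁.dropLast ++ (l₁.length + l₂.length) ::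
      l₂.map (starRelabel (l₁.getLastD 0) (l₁.length - 1)) := by
  simp only [starPerm, List.append_assoc, List.singleton_append]
  rfl

lemma starRelabel_lt_starRelabel_iff {L s a b : ℕ} (hL : L ≤ s + 1) (ha : 1 ≤ a) (hb : 1 ≤ b) :
    starRelabel L s b < starRelabel L s a ↔ b < a := by
  unfold starRelabel
  split_ifs <;> omega

/-- For `π₁ ∈ S_k` and `π₂ ∈ S_{n-k}` with `n - k ≥ 2`,
`des(π₁ ∗ π₂) = des'(π₁) + des(π₂) + 1`. -/
theorem des_starPerm (k m : ℕ) (hk : 1 ≤ k) (hm : 2 ≤ m)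
    (l₁ l₂ : List ℕ)
    (h₁ : l₁.Perm (List.range' 1 k)) (h₂ : l₂.Perm (List.range' 1 m)) :
    desL (starPerm l₁ l₂) = desL' l₁ + desL l₂ + 1 := by
  have hlen₁ : l₁.length = k := by simpa using h₁.length_eq
  have hlen₂ : l₂.length = m := by simpa using h₂.length_eq
  have mem₁ : ∀ a ∈ l₁, 1 ≤ a ∧ a < 1 + k := fun a ha => List.mem_range'_1.mp (h₁.subset ha)
  have mem₂ : ∀ a ∈ l₂, 1 ≤ a ∧ a < 1 + m := fun a ha => List.mem_range'_1.mp (h₂.subset ha)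
  have hne₁ : l₁ ≠ [] := List.ne_nil_of_length_pos (by omega)
  have hne₂ : l₂ ≠ [] := List.ne_nil_of_length_pos (by omega)
  have hlast : l₁.getLastD 0 ≤ k := by
    obtain ⟨a, l, rfl⟩ := List.exists_cons_of_ne_nil hne₁
    have := mem₁ (l.getLastD a) List.getLastD_mem_cons
    rw [List.getLastD_cons]
    omega
  have below_max₁ : ∀ a ∈ l₁.dropLast, a < l₁.length + l₂.length := fun a ha => by
    have := mem₁ a (List.dropLast_subset _ ha)
    omega
  have below_max₂ : ∀ a ∈ l₂.map (starRelabel (l₁.getLastD 0) (l₁.length - 1)),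
      a < l₁.length + l₂.length := List.forall_mem_map.2 fun a ha => by
    have := mem₂ a ha
    unfold starRelabel
    split_ifs <;> omega
  have relabel_lt_iff : ∀ a ∈ l₂, ∀ b ∈ l₂,
      starRelabel (l₁.getLastD 0) (l₁.length - 1) b <
        starRelabel (l₁.getLastD 0) (l₁.length - 1) a ↔ b < a := fun a ha b hb =>
    starRelabel_lt_starRelabel_iff (by omega) (mem₂ a ha).1 (mem₂ b hb).1
  rw [starPerm_eq, desL_append_cons, desL_append_singleton_of_forall_lt below_max₁,
    desL_cons_of_forall_lt (by simpa using hne₂) below_max₂, desL_map_of_lt_iff relabel_lt_iff,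
    desL', Nat.add_assoc]
end
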